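/- arXiv:2210.16303 — 2 statements merged into one kernel-verified Lean document; each statement's English description precedes it below -/
import Mathlib

section
/- Let K be an m×n real matrix with operator norm ‖K‖ ≤ k and let p > 0. Then the (n+m)×(n+m) block matrix [[Iₙ, Kᵀ], [K, KKᵀ + p·Iₘ]] is positive semidefinite and satisfies [[Iₙ, Kᵀ], [K, KKᵀ + p·Iₘ]] ⪰ (1/((1+k²)/p + 1)) · I_{n+m}. -/
open Matrix

/-- The spectral (operator 2-) norm of a real matrix. -/
noncomputable def opNorm {m n : ℕ} (K : Matrix (Fin m) (Fin n) ℝ) : ℝ :=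
  ‖LinearMap.toContinuousLinearMap (Matrix.toEuclideanLin K)‖

/-!
Subtracting `c • 1` leaves the top-left block `(1 - c) • 1`, and `1 - c` times its Schur complement
is `c • (k² • 1 - K Kᴴ) + ((p - c)(1 - c) - c k²) • 1`. Since `‖Kᴴ x‖ ≤ ‖K‖ ‖x‖` gives
`K Kᴴ ⪯ k² • 1`, this is positive semidefinite as soon as `c k² ≤ (p - c)(1 - c)`, and for
`c = p / (1 + k² + p)` the margin is exactly `c²`. Adding `c • 1` back gives the first claim.
-/

open scoped Matrix.Norms.L2Operator ComplexOrder

namespace Matrix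

variable {m n 𝕜 : Type*} [Fintype m] [Fintype n] [RCLike 𝕜]

theorem star_dotProduct_self_eq_norm_sq (v : n → 𝕜) :
    star v ⬝ᵥ v = (‖WithLp.toLp 2 v‖ : 𝕜) ^ 2 := by
  rw [← inner_self_eq_norm_sq_to_K, EuclideanSpace.inner_eq_star_dotProduct, dotProduct_comm]

theorem posSemidef_sq_smul_one_sub_mul_conjTranspose [DecidableEq m] [DecidableEq n]
    (A : Matrix m n 𝕜) {k : ℝ} (hk : ‖A‖ ≤ k) :
    ((k ^ 2 : ℝ) • (1 : Matrix m m 𝕜) - A * Aᴴ).PosSemidef := by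
  refine .of_dotProduct_mulVec_nonneg ?_ fun x => ?_
  · simp [IsHermitian, conjTranspose_sub, conjTranspose_mul]
  have hAx : ‖WithLp.toLp 2 (Aᴴ *ᵥ x)‖ ≤ k * ‖WithLp.toLp 2 x‖ :=
    calc _ ≤ ‖Aᴴ‖ * ‖WithLp.toLp 2 x‖ := l2_opNorm_mulVec Aᴴ (WithLp.toLp 2 x)
      _ ≤ k * ‖WithLp.toLp 2 x‖ := by rw [l2_opNorm_conjTranspose]; gcongr
  have hstar : star x ᵥ* A = star (Aᴴ *ᵥ x) := by rw [star_mulVec, conjTranspose_conjTranspose]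
  have hform : star x ⬝ᵥ (((k ^ 2 : ℝ) • (1 : Matrix m m 𝕜) - A * Aᴴ) *ᵥ x)
      = (((k * ‖WithLp.toLp 2 x‖) ^ 2 - ‖WithLp.toLp 2 (Aᴴ *ᵥ x)‖ ^ 2 : ℝ) : 𝕜) := by
    rw [sub_mulVec, dotProduct_sub, smul_mulVec, one_mulVec, ← mulVec_mulVec, dotProduct_mulVec,
      hstar, dotProduct_smul, star_dotProduct_self_eq_norm_sq, star_dotProduct_self_eq_norm_sq]
    simp [mul_pow, RCLike.real_smul_eq_coe_mul]
  rw [hform, RCLike.ofReal_nonneg, sub_nonneg]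
  gcongr

theorem posSemidef_fromBlocks_smul_one_iff [DecidableEq n] {a : ℝ} (ha : 0 < a)
    (B : Matrix n m 𝕜) (D : Matrix m m 𝕜) :
    (fromBlocks (a • 1) B Bᴴ D).PosSemidef ↔ (a • D - Bᴴ * B).PosSemidef := by
  have hA : (a • 1 : Matrix n n 𝕜).PosDef := PosDef.one.smul ha
  have : Invertible (a • 1 : Matrix n n 𝕜) := hA.isUnit.invertible
  have hinv : (a • 1 : Matrix n n 𝕜)⁻¹ = a⁻¹ • 1 :=
    inv_eq_left_inv (by rw [smul_mul_smul, inv_mul_cancel₀ ha.ne', one_mul, one_smul])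
  have hscale : a • D - Bᴴ * B = a • (D - Bᴴ * (a • 1 : Matrix n n 𝕜)⁻¹ * B) := by
    rw [hinv, Matrix.mul_smul, Matrix.mul_one, Matrix.smul_mul, smul_sub, smul_smul,
      mul_inv_cancel₀ ha.ne', one_smul]
  rw [PosDef.fromBlocks₁₁ B D hA, hscale]
  refine ⟨fun h => h.smul ha.le, fun h => ?_⟩
  simpa [smul_smul, ha.ne'] using h.smul (inv_nonneg.2 ha.le)

theorem posSemidef_fromBlocks_one_conjTranspose_sub_smul_one [DecidableEq m] [DecidableEq n]
    (K : Matrix m n 𝕜) {k p c : ℝ} (hK : ‖K‖ ≤ k) (hc₀ : 0 ≤ c) (hc₁ : c < 1)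
    (hpc : c * k ^ 2 ≤ (p - c) * (1 - c)) :
    (fromBlocks 1 Kᴴ K (K * Kᴴ + p • 1) - c • 1).PosSemidef := by
  have hblock : fromBlocks 1 Kᴴ K (K * Kᴴ + p • 1) - c • 1
      = fromBlocks ((1 - c) • 1) Kᴴ Kᴴᴴ (K * Kᴴ + (p - c) • 1) := by
    rw [conjTranspose_conjTranspose, ← fromBlocks_one, fromBlocks_smul, sub_eq_add_neg,
      fromBlocks_neg, fromBlocks_add]
    congr 1 <;> module
  have hschur : (1 - c) • (K * Kᴴ + (p - c) • 1) - Kᴴᴴ * Kᴴ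
      = c • ((k ^ 2 : ℝ) • 1 - K * Kᴴ) + ((p - c) * (1 - c) - c * k ^ 2) • 1 := by
    rw [conjTranspose_conjTranspose]
    module
  rw [hblock, posSemidef_fromBlocks_smul_one_iff (sub_pos.2 hc₁), hschur]
  exact ((posSemidef_sq_smul_one_sub_mul_conjTranspose K hK).smul hc₀).add
    (PosSemidef.one.smul (sub_nonneg.2 hpc))

end Matrix

theorem opNorm_eq_l2_opNorm {m n : ℕ} (K : Matrix (Fin m) (Fin n) ℝ) : opNorm K = ‖K‖ := rfl

theorem stmt0 {m n : ℕ} (K : Matrix (Fin m) (Fin n) ℝ) (k p : ℝ)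
    (hK : opNorm K ≤ k) (hp : 0 < p) :
    (Matrix.fromBlocks (1 : Matrix (Fin n) (Fin n) ℝ) Kᵀ K (K * Kᵀ + p • 1)).PosSemidef ∧
    (Matrix.fromBlocks (1 : Matrix (Fin n) (Fin n) ℝ) Kᵀ K (K * Kᵀ + p • 1)
      - (1 / ((1 + k ^ 2) / p + 1)) • 1).PosSemidef := by
  rw [div_add_one hp.ne', one_div_div]
  set c := p / (1 + k ^ 2 + p) with hc
  have hs : 0 < 1 + k ^ 2 + p := by positivity
  have hc₀ : 0 ≤ c := by positivity
  have hc₁ : c < 1 := by rw [hc, div_lt_one hs]; nlinarith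
  have hmargin : (p - c) * (1 - c) - c * k ^ 2 = c ^ 2 := by rw [hc]; field_simp; ring
  have hpc : c * k ^ 2 ≤ (p - c) * (1 - c) := by linarith [sq_nonneg c]
  rw [opNorm_eq_l2_opNorm] at hK
  have hgap := posSemidef_fromBlocks_one_conjTranspose_sub_smul_one K hK hc₀ hc₁ hpc
  rw [conjTranspose_eq_transpose_of_trivial] at hgap
  exact ⟨by simpa using hgap.add (PosSemidef.one.smul hc₀), hgap⟩
end

section
/- Let X₁ = [[A₁, B₁], [B₁ᵀ, C₁]] and X₂ = [[A₂, B₂], [B₂ᵀ, C₂]] be symmetric positive definite block matrices with A₁, A₂ square of the same size. If X₁ − X₂ is positive semidefinite, then the Schur complements satisfy (C₁ − B₁ᵀ A₁⁻¹ B₁) − (C₂ − B₂ᵀ A₂⁻¹ B₂) ⪰ 0. -/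
/-!
The quadratic form of the Schur complement `D - Bᴴ A⁻¹ B` at `y` is the minimum over `x` of the
quadratic form of `fromBlocks A B Bᴴ D` at `(x, y)`, attained at `x = -A⁻¹ B y`. Taking this
minimiser `x` for the first matrix,
`yᴴ S₁ y = (x, y)ᴴ X₁ (x, y) ≥ (x, y)ᴴ X₂ (x, y) ≥ yᴴ S₂ y`.
-/

open Matrix

namespace Matrix

variable {m n R : Type*} [CommRing R] [StarRing R]

theorem PosDef.of_fromBlocks₁₁ [PartialOrder R] {A : Matrix m m R} {B : Matrix m n R}
    {C : Matrix n m R} {D : Matrix n n R} (h : (fromBlocks A B C D).PosDef) : A.PosDef :=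
  h.submatrix Sum.inl_injective

variable [Fintype m] [DecidableEq m]

theorem IsHermitian.sub_schur_complement {A₁ A₂ : Matrix m m R} {B₁ B₂ : Matrix m n R}
    {D₁ D₂ : Matrix n n R} (hA₁ : A₁.IsHermitian) (hA₂ : A₂.IsHermitian)
    (h : (Matrix.fromBlocks A₁ B₁ B₁ᴴ D₁ - Matrix.fromBlocks A₂ B₂ B₂ᴴ D₂).IsHermitian) :
    ((D₁ - B₁ᴴ * A₁⁻¹ * B₁) - (D₂ - B₂ᴴ * A₂⁻¹ * B₂)).IsHermitian := by
  have hD : (D₁ - D₂).IsHermitian := h.submatrix Sum.inr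
  rw [sub_sub_sub_comm]
  exact hD.sub ((isHermitian_conjTranspose_mul_mul B₁ hA₁.inv).sub
    (isHermitian_conjTranspose_mul_mul B₂ hA₂.inv))

variable [Fintype n]

theorem dotProduct_mulVec_schur_complement_eq {A : Matrix m m R} (hA : A.IsHermitian)
    [Invertible A] (B : Matrix m n R) (D : Matrix n n R) (y : n → R) :
    star y ⬝ᵥ (D - Bᴴ * A⁻¹ * B) *ᵥ y =
      star (-((A⁻¹ * B) *ᵥ y) ⊕ᵥ y) ⬝ᵥ fromBlocks A B Bᴴ D *ᵥ (-((A⁻¹ * B) *ᵥ y) ⊕ᵥ y) := by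
  rw [dotProduct_mulVec, dotProduct_mulVec, schur_complement_eq₁₁ B D _ y hA, neg_add_cancel,
    dotProduct_zero, zero_add]

variable [PartialOrder R] [StarOrderedRing R]

theorem dotProduct_mulVec_schur_complement_le {A : Matrix m m R} (hA : A.PosSemidef)
    [Invertible A] (B : Matrix m n R) (D : Matrix n n R) (x : m → R) (y : n → R) :
    star y ⬝ᵥ (D - Bᴴ * A⁻¹ * B) *ᵥ y ≤
      star (x ⊕ᵥ y) ⬝ᵥ fromBlocks A B Bᴴ D *ᵥ (x ⊕ᵥ y) := by
  have hAx := hA.dotProduct_mulVec_nonneg (x + (A⁻¹ * B) *ᵥ y)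
  rw [dotProduct_mulVec] at hAx
  rw [dotProduct_mulVec, dotProduct_mulVec, schur_complement_eq₁₁ B D x y hA.1]
  exact le_add_of_nonneg_left hAx

theorem PosSemidef.sub_schur_complement {A₁ A₂ : Matrix m m R} {B₁ B₂ : Matrix m n R}
    {D₁ D₂ : Matrix n n R} (hA₁ : A₁.IsHermitian) (hA₂ : A₂.PosSemidef)
    [Invertible A₁] [Invertible A₂]
    (h : (fromBlocks A₁ B₁ B₁ᴴ D₁ - fromBlocks A₂ B₂ B₂ᴴ D₂).PosSemidef) :
    ((D₁ - B₁ᴴ * A₁⁻¹ * B₁) - (D₂ - B₂ᴴ * A₂⁻¹ * B₂)).PosSemidef := by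
  refine .of_dotProduct_mulVec_nonneg (IsHermitian.sub_schur_complement hA₁ hA₂.1 h.1) fun y => ?_
  set z := -((A₁⁻¹ * B₁) *ᵥ y) ⊕ᵥ y
  have hX := h.dotProduct_mulVec_nonneg z
  rw [sub_mulVec, dotProduct_sub, sub_nonneg] at hX ⊢
  calc star y ⬝ᵥ (D₂ - B₂ᴴ * A₂⁻¹ * B₂) *ᵥ y
      ≤ star z ⬝ᵥ fromBlocks A₂ B₂ B₂ᴴ D₂ *ᵥ z :=
        dotProduct_mulVec_schur_complement_le hA₂ _ _ _ _
    _ ≤ star z ⬝ᵥ fromBlocks A₁ B₁ B₁ᴴ D₁ *ᵥ z := hX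
    _ = star y ⬝ᵥ (D₁ - B₁ᴴ * A₁⁻¹ * B₁) *ᵥ y :=
        (dotProduct_mulVec_schur_complement_eq hA₁ _ _ _).symm

end Matrix

theorem stmt3 {n m : ℕ}
    (A₁ A₂ : Matrix (Fin n) (Fin n) ℝ) (B₁ B₂ : Matrix (Fin n) (Fin m) ℝ)
    (C₁ C₂ : Matrix (Fin m) (Fin m) ℝ)
    (h₁ : (Matrix.fromBlocks A₁ B₁ B₁ᵀ C₁).PosDef)
    (h₂ : (Matrix.fromBlocks A₂ B₂ B₂ᵀ C₂).PosDef)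
    (h : (Matrix.fromBlocks A₁ B₁ B₁ᵀ C₁ - Matrix.fromBlocks A₂ B₂ B₂ᵀ C₂).PosSemidef) :
    ((C₁ - B₁ᵀ * A₁⁻¹ * B₁) - (C₂ - B₂ᵀ * A₂⁻¹ * B₂)).PosSemidef := by
  have hA₁ := h₁.of_fromBlocks₁₁
  have hA₂ := h₂.of_fromBlocks₁₁
  have := hA₁.isUnit.invertible
  have := hA₂.isUnit.invertible
  rw [← conjTranspose_eq_transpose_of_trivial B₁,
    ← conjTranspose_eq_transpose_of_trivial B₂] at h ⊢
  exact PosSemidef.sub_schur_complement hA₁.isHermitian hA₂.posSemidef h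
end
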